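/- Let τ be a correct compositional translation from SYNCSIMPLE to LOCKSIMPLE_{k,IS} with k ≥ 2. Then for every index i with 1 ≤ i ≤ k, the total number of occurrences of P_i in τ(!) and τ(?) together is at most the total number of occurrences of T_i in τ(!) and τ(?) together. -/

import Mathlib

/-- Symbols of SYNCSIMPLE: `!` (bang) and `?` (ques). -/
inductive SSym | bang | ques
deriving DecidableEq

/-- A SYNCSIMPLE subprocess: a string over {!,?} ending with `0` (false) or `✓` (true). -/
abbrev SSub := List SSym × Bool

/-- A SYNCSIMPLE process: a multiset of subprocesses. -/
abbrev SProc := Multiset SSub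

/-- The SYS reduction: a leading `!` and a leading `?` of two subprocesses are consumed. -/
def SysStep (P Q : SProc) : Prop :=
  ∃ (u1 u2 : List SSym) (b1 b2 : Bool) (R : SProc),
    P = (SSym.bang :: u1, b1) ::ₘ (SSym.ques :: u2, b2) ::ₘ R ∧
    Q = (u1, b1) ::ₘ (u2, b2) ::ₘ R

/-- A process is successful if it contains the subprocess `✓`. -/
def SSuccessful (P : SProc) : Prop := (([], true) : SSub) ∈ P

def SMayConv (P : SProc) : Prop :=
  ∃ Q, Relation.ReflTransGen SysStep P Q ∧ SSuccessful Q

def SMustConv (P : SProc) : Prop :=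
  ∀ Q, Relation.ReflTransGen SysStep P Q → SMayConv Q

/-- Lock operations: put `P_i` and take `T_i`. -/
inductive LOp | put | take
deriving DecidableEq

abbrev LSym (k : ℕ) := LOp × Fin k
abbrev LSub (k : ℕ) := List (LSym k) × Bool
abbrev LProc (k : ℕ) := Multiset (LSub k)
/-- The store of `k` locks: `true` = full (■), `false` = empty (□). -/
abbrev Store (k : ℕ) := Fin k → Bool

/-- LOCKSIMPLE step: `P_i` fills an empty lock `i` (blocks if full);
    `T_i` empties lock `i` and never blocks. -/
def LockStep {k : ℕ} : (LProc k × Store k) → (LProc k × Store k) → Prop :=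
  fun s t => ∃ (i : Fin k) (u : List (LSym k)) (b : Bool) (R : LProc k),
    ((s.1 = ((LOp.put, i) :: u, b) ::ₘ R ∧ s.2 i = false ∧
      t.1 = (u, b) ::ₘ R ∧ t.2 = Function.update s.2 i true) ∨
     (s.1 = ((LOp.take, i) :: u, b) ::ₘ R ∧
      t.1 = (u, b) ::ₘ R ∧ t.2 = Function.update s.2 i false))

def LSuccessful {k : ℕ} (s : LProc k × Store k) : Prop := (([], true) : LSub k) ∈ s.1

def LMayConv {k : ℕ} (s : LProc k × Store k) : Prop :=
  ∃ t, Relation.ReflTransGen LockStep s t ∧ LSuccessful t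

def LMustConv {k : ℕ} (s : LProc k × Store k) : Prop :=
  ∀ t, Relation.ReflTransGen LockStep s t → LMayConv t

/-- The compositional translation determined by the strings `tb = τ(!)` and `tq = τ(?)`,
    applied to a subprocess. -/
def transSub {k : ℕ} (tb tq : List (LSym k)) (u : SSub) : LSub k :=
  (u.1.flatMap (fun c => match c with | SSym.bang => tb | SSym.ques => tq), u.2)

/-- The compositional translation applied to a process. -/
def transProc {k : ℕ} (tb tq : List (LSym k)) (P : SProc) : LProc k :=
  P.map (transSub tb tq)

/-- Correctness of the compositional translation `(tb, tq)` with initial store `IS`: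
    may- and must-convergence are preserved and reflected. -/
def Correct {k : ℕ} (IS : Store k) (tb tq : List (LSym k)) : Prop :=
  ∀ P : SProc,
    (SMayConv P ↔ LMayConv (transProc tb tq P, IS)) ∧
    (SMustConv P ↔ LMustConv (transProc tb tq P, IS))

/-- The solo execution of the string `s` from store `IS` reaches the point where
    `(put, i) :: rest` remains and deadlocks there since lock `i` is full. -/
def SoloBlocked {k : ℕ} (IS : Store k) (s : List (LSym k)) (i : Fin k)
    (rest : List (LSym k)) : Prop :=
  ∃ C : Store k,
    Relation.ReflTransGen LockStep (({(s, false)} : LProc k), IS)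
      (({((LOp.put, i) :: rest, false)} : LProc k), C) ∧
    C i = true

/-- Blocking type `P_i`: the blocking prefix is `R P_i` with `R` free of `P_i, T_i`. -/
def BlockingTypeP {k : ℕ} (IS : Store k) (s : List (LSym k)) (i : Fin k) : Prop :=
  ∃ r rest, s = r ++ (LOp.put, i) :: rest ∧ (∀ x ∈ r, x.2 ≠ i) ∧
    SoloBlocked IS s i rest

/-- Blocking type `P_i P_i`: the blocking prefix is `R₁ P_i R₂ P_i` with
    `R₂` free of `P_i, T_i`, deadlocking exactly before the last `P_i`. -/
def BlockingTypePP {k : ℕ} (IS : Store k) (s : List (LSym k)) (i : Fin k) : Prop :=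
  ∃ r1 r2 rest, s = r1 ++ (LOp.put, i) :: r2 ++ (LOp.put, i) :: rest ∧
    (∀ x ∈ r2, x.2 ≠ i) ∧ SoloBlocked IS s i rest

/-!
Let `d` be the number of `P_i` minus the number of `T_i` in `τ(!) τ(?)`, and suppose `d ≥ 1`.
Executing `P_i` needs lock `i` empty and fills it, while executing `T_i` empties it; hence no
execution ever performs more than one `P_i` beyond the `T_i` it performs. Take `n` large and let
`A, B` be `τ(!), τ(?)` in the order that makes `A` contain more `P_i` than `T_i`. The process
`!ⁿ✓ | ?ⁿ0` (or `?ⁿ✓ | !ⁿ0`) may converge, so its translation `Aⁿ✓ | Bⁿ0` may converge too. A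
successful run executes all of `Aⁿ` and a prefix of `Bⁿ`, so the unexecuted suffix of `Bⁿ`
carries a `P_i`-excess of at least `n·d - 1`. But that excess is at most `|B|` plus the excess of
the whole copies of `B` in the suffix, which is less than `n·d - 1` once `n > |B| + 1`, because
the excess of `A` is at least `1`.
-/

namespace LockSimple

variable {k : ℕ}

lemma isSuffix_append_cases {α : Type*} {l₁ l₂ r : List α} (h : r <:+ l₁ ++ l₂) :
    r <:+ l₂ ∨ ∃ w, w <:+ l₁ ∧ r = w ++ l₂ := by
  obtain ⟨p, hp⟩ := h
  rcases List.append_eq_append_iff.mp hp with ⟨w, rfl, rfl⟩ | ⟨q, rfl, rfl⟩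
  · exact Or.inr ⟨w, List.suffix_append _ _, rfl⟩
  · exact Or.inl (List.suffix_append _ _)

section NetPuts

variable (i : Fin k)

def netPuts (l : List (LSym k)) : ℤ :=
  l.count (LOp.put, i) - l.count (LOp.take, i)

@[simp] lemma netPuts_nil : netPuts i [] = 0 := by
  simp [netPuts]

@[simp] lemma netPuts_append (l₁ l₂ : List (LSym k)) :
    netPuts i (l₁ ++ l₂) = netPuts i l₁ + netPuts i l₂ := by
  simp only [netPuts, List.count_append]
  push_cast
  ring

lemma netPuts_cons_put (j : Fin k) (l : List (LSym k)) :
    netPuts i ((LOp.put, j) :: l) = netPuts i l + if j = i then 1 else 0 := by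
  by_cases hj : j = i <;> simp [netPuts, hj]
  ring

lemma netPuts_cons_take (j : Fin k) (l : List (LSym k)) :
    netPuts i ((LOp.take, j) :: l) = netPuts i l - if j = i then 1 else 0 := by
  by_cases hj : j = i <;> simp [netPuts, hj]
  ring

lemma netPuts_le_length (l : List (LSym k)) : netPuts i l ≤ l.length := by
  have : l.count (LOp.put, i) ≤ l.length := List.count_le_length
  simp only [netPuts]
  omega

lemma netPuts_flatten_replicate (n : ℕ) (l : List (LSym k)) :
    netPuts i (List.replicate n l).flatten = n * netPuts i l := by
  induction n with
  | zero => simp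
  | succ n ih =>
    rw [List.replicate_succ, List.flatten_cons, netPuts_append, ih]
    push_cast
    ring

lemma netPuts_le_of_suffix_flatten_replicate {l r : List (LSym k)} {n : ℕ}
    (h : r <:+ (List.replicate n l).flatten) :
    netPuts i r ≤ l.length + n * max (netPuts i l) 0 := by
  induction n generalizing r with
  | zero =>
    rw [List.replicate_zero, List.flatten_nil, List.suffix_nil] at h
    simp [h]
  | succ n ih =>
    have hmax : 0 ≤ max (netPuts i l) 0 := le_max_right _ _
    rw [List.replicate_succ, List.flatten_cons] at h
    rcases isSuffix_append_cases h with hr | ⟨w, hw, rfl⟩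
    · have := ih hr
      push_cast
      linarith
    · have h₁ := netPuts_le_length i w
      have h₂ : (w.length : ℤ) ≤ l.length := by exact_mod_cast hw.length_le
      rw [netPuts_append, netPuts_flatten_replicate]
      push_cast
      nlinarith [le_max_left (netPuts i l) 0]

end NetPuts

section Potential

variable (i : Fin k)

def pendingNetPuts (M : LProc k) : ℤ :=
  (M.map fun u => netPuts i u.1).sum

@[simp] lemma pendingNetPuts_cons (u : LSub k) (M : LProc k) :
    pendingNetPuts i (u ::ₘ M) = netPuts i u.1 + pendingNetPuts i M := by
  simp [pendingNetPuts]

def lockSlack (S : Store k) : ℤ := if S i then 0 else 1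

/-- Never decreases: `P_i` spends the slack of the empty lock `i`, and `T_i` restores at most
one unit of slack. -/
def potential (s : LProc k × Store k) : ℤ :=
  pendingNetPuts i s.1 - lockSlack i s.2

lemma potential_le_of_lockStep {s t : LProc k × Store k} (h : LockStep s t) :
    potential i s ≤ potential i t := by
  obtain ⟨j, u, b, R, ⟨hs, hfree, ht, hS⟩ | ⟨hs, ht, hS⟩⟩ := h
  · simp only [potential, lockSlack, hs, ht, hS, pendingNetPuts_cons, netPuts_cons_put]
    rcases eq_or_ne j i with rfl | hji
    · simp only [↓reduceIte, hfree, Bool.false_eq_true, Function.update_self]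
      linarith
    · simp [hji, Function.update_of_ne hji.symm]
  · simp only [potential, lockSlack, hs, ht, hS, pendingNetPuts_cons, netPuts_cons_take]
    rcases eq_or_ne j i with rfl | hji
    · cases s.2 j <;> simp
    · simp [hji, Function.update_of_ne hji.symm]

lemma potential_le_of_reflTransGen {s t : LProc k × Store k}
    (h : Relation.ReflTransGen LockStep s t) : potential i s ≤ potential i t := by
  induction h with
  | refl => rfl
  | tail _ hst ih => exact ih.trans (potential_le_of_lockStep i hst)

end Potential

lemma LockStep.exists_cons {s t : LProc k × Store k} (h : LockStep s t) :
    ∃ (x : LSym k) (u : List (LSym k)) (b : Bool) (R : LProc k),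
      s.1 = (x :: u, b) ::ₘ R ∧ t.1 = (u, b) ::ₘ R := by
  obtain ⟨j, u, b, R, ⟨hs, -, ht, -⟩ | ⟨hs, ht, -⟩⟩ := h
  exacts [⟨_, u, b, R, hs, ht⟩, ⟨_, u, b, R, hs, ht⟩]

lemma exists_suffix_pair_of_reflTransGen {u v : List (LSym k)} {b c : Bool} {S : Store k}
    {t : LProc k × Store k} (h : Relation.ReflTransGen LockStep ((u, b) ::ₘ {(v, c)}, S) t) :
    ∃ u' v', u' <:+ u ∧ v' <:+ v ∧ t.1 = (u', b) ::ₘ {(v', c)} := by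
  induction h with
  | refl => exact ⟨u, v, List.suffix_refl u, List.suffix_refl v, rfl⟩
  | tail _ hst ih =>
    obtain ⟨u', v', hu, hv, hpair⟩ := ih
    obtain ⟨x, w, d, R, hs, ht⟩ := LockStep.exists_cons hst
    rw [hpair] at hs
    rcases Multiset.cons_eq_cons.mp hs with ⟨hx, rfl⟩ | ⟨-, R', hv', rfl⟩
    · obtain ⟨rfl, rfl⟩ := Prod.mk.inj hx
      exact ⟨w, v', (List.suffix_cons x w).trans hu, hv, ht⟩
    · obtain ⟨hx, rfl⟩ := (Multiset.singleton_eq_cons_iff _).mp hv'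
      obtain ⟨rfl, rfl⟩ := Prod.mk.inj hx.symm
      exact ⟨u', w, hu, (List.suffix_cons x w).trans hv, ht.trans (Multiset.cons_swap _ _ _)⟩

lemma exists_suffix_of_lMayConv (i : Fin k) {IS : Store k} {u v : List (LSym k)}
    (h : LMayConv ((u, true) ::ₘ {(v, false)}, IS)) :
    ∃ r, r <:+ v ∧ netPuts i u + netPuts i v ≤ netPuts i r + 1 := by
  obtain ⟨t, hrun, hsucc⟩ := h
  obtain ⟨u', r, -, hr, ht⟩ := exists_suffix_pair_of_reflTransGen hrun
  have hu' : u' = [] := by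
    simpa [LSuccessful, ht, eq_comm] using hsucc
  refine ⟨r, hr, ?_⟩
  have hpot := potential_le_of_reflTransGen i hrun
  simp only [potential, pendingNetPuts, Multiset.map_cons, Multiset.map_singleton,
    Multiset.sum_cons, Multiset.sum_singleton, lockSlack, ht, hu', netPuts_nil, zero_add] at hpot
  split_ifs at hpot <;> linarith

lemma le_length_add_one_of_lMayConv (i : Fin k) {IS : Store k} {A B : List (LSym k)} {n : ℕ}
    (h : LMayConv (((List.replicate n A).flatten, true) ::ₘ
      {((List.replicate n B).flatten, false)}, IS))
    (hA : 1 ≤ netPuts i A) (hAB : 1 ≤ netPuts i A + netPuts i B) :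
    n ≤ B.length + 1 := by
  obtain ⟨r, hr, hexcess⟩ := exists_suffix_of_lMayConv i h
  have hsuffix := netPuts_le_of_suffix_flatten_replicate i hr
  rw [netPuts_flatten_replicate, netPuts_flatten_replicate] at hexcess
  have hn : (0 : ℤ) ≤ n := n.cast_nonneg
  rcases le_total (netPuts i B) 0 with hB | hB
  · rw [max_eq_right hB] at hsuffix
    nlinarith
  · rw [max_eq_left hB] at hsuffix
    nlinarith

lemma sysStep_reflTransGen_replicate (n : ℕ) (b c : Bool) :
    Relation.ReflTransGen SysStep
      ((List.replicate n SSym.bang, b) ::ₘ {(List.replicate n SSym.ques, c)})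
      (([], b) ::ₘ {([], c)}) := by
  induction n with
  | zero => rfl
  | succ n ih => exact .head ⟨_, _, b, c, 0, rfl, rfl⟩ ih

lemma sMayConv_replicate (n : ℕ) {b c : Bool} (h : b = true ∨ c = true) :
    SMayConv ((List.replicate n SSym.bang, b) ::ₘ {(List.replicate n SSym.ques, c)}) :=
  ⟨_, sysStep_reflTransGen_replicate n b c, by rcases h with rfl | rfl <;> simp [SSuccessful]⟩

lemma transProc_replicate (tb tq : List (LSym k)) (n : ℕ) (b c : Bool) :
    transProc tb tq ((List.replicate n SSym.bang, b) ::ₘ {(List.replicate n SSym.ques, c)}) =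
      ((List.replicate n tb).flatten, b) ::ₘ {((List.replicate n tq).flatten, c)} := by
  simp [transProc, transSub, List.flatMap_replicate]

end LockSimple

open LockSimple

/-- for a correct compositional translation with `k ≥ 2` locks,
for each lock `i` the number of `P_i` in `τ(!)` and `τ(?)` together is at most
the number of `T_i` in `τ(!)` and `τ(?)` together. -/
theorem puts_le_takes :
    ∀ (k : ℕ), 2 ≤ k → ∀ (IS : Store k) (tb tq : List (LSym k)),
      Correct IS tb tq →
      ∀ i : Fin k,
        (tb ++ tq).count (LOp.put, i) ≤ (tb ++ tq).count (LOp.take, i) := by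
  intro k _ IS tb tq hcorrect i
  by_contra! hlt
  have hexcess : 1 ≤ netPuts i tb + netPuts i tq := by
    simp only [List.count_append] at hlt
    simp only [netPuts]
    omega
  set n := tb.length + tq.length + 2
  have hmay {b c : Bool} (h : b = true ∨ c = true) :
      LMayConv (((List.replicate n tb).flatten, b) ::ₘ {((List.replicate n tq).flatten, c)}, IS) :=
    transProc_replicate tb tq n b c ▸ ((hcorrect _).1.mp (sMayConv_replicate n h))
  rcases le_or_gt 1 (netPuts i tb) with htb | htb
  · have := le_length_add_one_of_lMayConv i (hmay (.inl rfl)) htb hexcess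
    omega
  · have htq : 1 ≤ netPuts i tq := by omega
    have hswap := hmay (b := false) (c := true) (.inr rfl)
    rw [← Multiset.insert_eq_cons, Multiset.pair_comm, Multiset.insert_eq_cons] at hswap
    have := le_length_add_one_of_lMayConv i hswap htq (by omega)
    omega
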